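/- If G is a complete tripartite graph, then the edge set of a smallest side of G is a minimum 𝒯-transversal of G; that is, τ△(G) equals the minimum of |E_AB|, |E_AC|, |E_BC|. -/

import Mathlib

open SimpleGraph

variable {V : Type*}

/-- The set of edges of a triangle, given by its vertex set `t`:
all unordered pairs of distinct vertices of `t`. -/
def triangleEdges (t : Finset V) : Set (Sym2 V) :=
  {e | ∃ u ∈ t, ∃ v ∈ t, u ≠ v ∧ e = s(u, v)}

/-- `E'` is a `𝒯`-transversal of `G`: a set of edges of `G` meeting every triangle of `G`. -/
def IsTriTransversal (G : SimpleGraph V) (E' : Set (Sym2 V)) : Prop :=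
  E' ⊆ G.edgeSet ∧ ∀ t : Finset V, G.IsNClique 3 t → ∃ e ∈ triangleEdges t, e ∈ E'

/-- `τ△ G`: the minimum cardinality of a `𝒯`-transversal of `G`. -/
noncomputable def triTransversalNum (G : SimpleGraph V) : ℕ :=
  sInf {n | ∃ E' : Set (Sym2 V), IsTriTransversal G E' ∧ E'.ncard = n}

/-- `P` is a packing in `G`: a set of triangles of `G` that are pairwise edge-disjoint. -/
def IsTriPacking (G : SimpleGraph V) (P : Set (Finset V)) : Prop :=
  (∀ t ∈ P, G.IsNClique 3 t) ∧
    P.Pairwise fun t t' => Disjoint (triangleEdges t) (triangleEdges t')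

/-- `ν△ G`: the maximum cardinality of a packing of triangles in `G`. -/
noncomputable def triPackingNum (G : SimpleGraph V) : ℕ :=
  sSup {n | ∃ P : Set (Finset V), IsTriPacking G P ∧ P.ncard = n}

/-- The set of edges of `G` with one endpoint in `M` and the other in `W`. -/
def edgesBetween (G : SimpleGraph V) (M W : Set V) : Set (Sym2 V) :=
  {e | e ∈ G.edgeSet ∧ ∃ u ∈ M, ∃ w ∈ W, e = s(u, w)}

/-- `G` is tripartite with parts `A`, `B`, `C`: the vertex set is partitioned into
the three independent sets `A`, `B`, `C`. -/
def IsTripartition (G : SimpleGraph V) (A B C : Set V) : Prop :=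
  A ∪ B ∪ C = Set.univ ∧ Disjoint A B ∧ Disjoint A C ∧ Disjoint B C ∧
    (∀ u ∈ A, ∀ v ∈ A, ¬G.Adj u v) ∧ (∀ u ∈ B, ∀ v ∈ B, ¬G.Adj u v) ∧
    (∀ u ∈ C, ∀ v ∈ C, ¬G.Adj u v)

/-- The side `G[X ∪ Y]` of a tripartite graph is a complete bipartite graph. -/
def CompleteSide (G : SimpleGraph V) (X Y : Set V) : Prop :=
  ∀ x ∈ X, ∀ y ∈ Y, G.Adj x y

/-- `W` is a vertex cover of the subgraph edge-induced by the edge set `Y`. -/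
def CoversEdges (W : Set V) (Y : Set (Sym2 V)) : Prop :=
  ∀ e ∈ Y, ∃ v ∈ W, v ∈ e

/-- `M` is a matching consisting of edges from the edge set `F`:
the edges of `M` are pairwise vertex-disjoint. -/
def IsMatchingIn (F : Set (Sym2 V)) (M : Set (Sym2 V)) : Prop :=
  M ⊆ F ∧ M.Pairwise fun e f => ∀ v, v ∈ e → v ∉ f

/-! A triangle of a tripartite graph has one vertex in each part, so the edge set of each side
meets every triangle. Conversely, let `E'` be a transversal, `Z` a largest part and `X`, `Y` the
other two. Each triple `(x, y, z) ∈ X × Y × Z` spans a triangle, so one of `xy`, `xz`, `yz` lies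
in `E'`; summing over all triples gives
`|X| |Y| |Z| ≤ |Z| e(X, Y) + |Y| e(X, Z) + |X| e(Y, Z) ≤ |Z| |E'|`, where `e(P, Q)` counts the
edges of `E'` between `P` and `Q`. Hence `|E_XY| ≤ |X| |Y| ≤ |E'|`. -/

open Finset

theorem Finset.card_mul_card_le_of_forall_or {α β γ : Type*} (X : Finset α) (Y : Finset β)
    (Z : Finset γ) (p : α → β → Prop) (q : α → γ → Prop) (r : β → γ → Prop)
    [∀ x y, Decidable (p x y)] [∀ x z, Decidable (q x z)] [∀ y z, Decidable (r y z)]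
    (hX : #X ≤ #Z) (hY : #Y ≤ #Z)
    (h : ∀ x ∈ X, ∀ y ∈ Y, ∀ z ∈ Z, p x y ∨ q x z ∨ r y z) :
    #X * #Y ≤ #{xy ∈ X ×ˢ Y | p xy.1 xy.2} + #{xz ∈ X ×ˢ Z | q xz.1 xz.2} +
      #{yz ∈ Y ×ˢ Z | r yz.1 yz.2} := by
  rcases (#Z).eq_zero_or_pos with hZ | hZ
  · simp [Nat.le_zero.mp (hZ ▸ hX)]
  set P := ∑ x ∈ X, ∑ y ∈ Y, if p x y then 1 else 0
  set Q := ∑ x ∈ X, ∑ z ∈ Z, if q x z then 1 else 0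
  set R := ∑ y ∈ Y, ∑ z ∈ Z, if r y z then 1 else 0
  have hcover : #X * #Y * #Z ≤ #Z * P + #Y * Q + #X * R := calc
    #X * #Y * #Z = ∑ x ∈ X, ∑ y ∈ Y, ∑ z ∈ Z, 1 := by simp [mul_assoc]
    _ ≤ ∑ x ∈ X, ∑ y ∈ Y, ∑ z ∈ Z,
          ((if p x y then 1 else 0) + (if q x z then 1 else 0) + (if r y z then 1 else 0)) := by
      gcongr with x hx y hy z hz
      rcases h x hx y hy z hz with h | h | h <;> simp only [h, if_true] <;> omega
    _ = #Z * P + #Y * Q + #X * R := by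
      simp only [sum_add_distrib, sum_const, smul_eq_mul, P, Q, R, mul_sum]
  have hPQR : #X * #Y * #Z ≤ (P + Q + R) * #Z := by
    calc _ ≤ #Z * P + #Y * Q + #X * R := hcover
      _ ≤ #Z * P + #Z * Q + #Z * R := by gcongr
      _ = (P + Q + R) * #Z := by ring
  have hP : #{xy ∈ X ×ˢ Y | p xy.1 xy.2} = P := by rw [card_filter, sum_product]
  have hQ : #{xz ∈ X ×ˢ Z | q xz.1 xz.2} = Q := by rw [card_filter, sum_product]
  have hR : #{yz ∈ Y ×ˢ Z | r yz.1 yz.2} = R := by rw [card_filter, sum_product]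
  rw [hP, hQ, hR]
  exact Nat.le_of_mul_le_mul_right hPQR hZ

namespace IsTripartition

variable {G : SimpleGraph V} {A B C : Set V}

theorem rotate (h : IsTripartition G A B C) : IsTripartition G B C A := by
  obtain ⟨hcov, hAB, hAC, hBC, iA, iB, iC⟩ := h
  refine ⟨?_, hBC, hAB.symm, hAC.symm, iB, iC, iA⟩
  rw [← hcov]; ac_rfl

theorem swap_right (h : IsTripartition G A B C) : IsTripartition G A C B := by
  obtain ⟨hcov, hAB, hAC, hBC, iA, iB, iC⟩ := h
  refine ⟨?_, hAC, hAB, hBC.symm, iA, iC, iB⟩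
  rw [← hcov, Set.union_right_comm]

theorem exists_mem_of_isNClique (h : IsTripartition G A B C) {t : Finset V}
    (ht : G.IsNClique 3 t) : ∃ v ∈ t, v ∈ A := by
  classical
  obtain ⟨hcov, -, -, -, -, iB, iC⟩ := h
  obtain ⟨a, b, c, hab, hac, hbc, rfl⟩ := is3Clique_iff.mp ht
  by_contra! hA
  have mem : ∀ v ∈ ({a, b, c} : Finset V), v ∈ B ∨ v ∈ C := fun v hv => by
    have : v ∈ A ∪ B ∪ C := hcov ▸ Set.mem_univ v
    grind
  grind

theorem isTriTransversal_edgesBetween (h : IsTripartition G A B C) :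
    IsTriTransversal G (edgesBetween G A B) := by
  refine ⟨fun e he => he.1, fun t ht => ?_⟩
  obtain ⟨u, hut, huA⟩ := h.exists_mem_of_isNClique ht
  obtain ⟨v, hvt, hvB⟩ := h.rotate.exists_mem_of_isNClique ht
  have huv : u ≠ v := fun huv => Set.disjoint_left.mp h.2.1 huA (huv ▸ hvB)
  exact ⟨s(u, v), ⟨u, hut, v, hvt, huv, rfl⟩, ht.1 hut hvt huv, u, huA, v, hvB, rfl⟩

end IsTripartition

theorem CompleteSide.symm {G : SimpleGraph V} {X Y : Set V} (h : CompleteSide G X Y) :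
    CompleteSide G Y X :=
  fun y hy x hx => (h x hx y hy).symm

theorem edgesBetween_comm (G : SimpleGraph V) (X Y : Set V) :
    edgesBetween G X Y = edgesBetween G Y X := by
  ext e
  constructor <;> rintro ⟨he, u, hu, w, hw, rfl⟩ <;> exact ⟨he, w, hw, u, hu, Sym2.eq_swap⟩

theorem disjoint_edgesBetween (G : SimpleGraph V) {X Y Z : Set V} (hXY : Disjoint X Y)
    (hXZ : Disjoint X Z) : Disjoint (edgesBetween G X Z) (edgesBetween G Y Z) := by
  rw [Set.disjoint_left]
  rintro e ⟨-, u, hu, w, -, rfl⟩ ⟨-, u', hu', w', hw', huw⟩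
  rcases Sym2.eq_iff.mp huw with ⟨h, -⟩ | ⟨h, -⟩
  · exact Set.disjoint_left.mp hXY hu (h ▸ hu')
  · exact Set.disjoint_left.mp hXZ hu (h ▸ hw')

theorem ncard_inter_edgesBetween_add_le [Finite V] (G : SimpleGraph V) {X Y Z : Set V}
    (hXY : Disjoint X Y) (hXZ : Disjoint X Z) (hYZ : Disjoint Y Z) (E' : Set (Sym2 V)) :
    (E' ∩ edgesBetween G X Y).ncard + (E' ∩ edgesBetween G X Z).ncard +
      (E' ∩ edgesBetween G Y Z).ncard ≤ E'.ncard := by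
  have hXY_XZ : Disjoint (edgesBetween G X Y) (edgesBetween G X Z) := by
    rw [edgesBetween_comm G X Y, edgesBetween_comm G X Z]
    exact disjoint_edgesBetween G hYZ hXY.symm
  have hXY_YZ : Disjoint (edgesBetween G X Y) (edgesBetween G Y Z) := by
    rw [edgesBetween_comm G Y Z]
    exact disjoint_edgesBetween G hXZ hXY
  have hXZ_YZ : Disjoint (edgesBetween G X Z) (edgesBetween G Y Z) :=
    disjoint_edgesBetween G hXY hXZ
  rw [← Set.ncard_union_eq (hXY_XZ.mono Set.inter_subset_right Set.inter_subset_right),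
    ← Set.ncard_union_eq (Set.disjoint_union_left.mpr
      ⟨hXY_YZ.mono Set.inter_subset_right Set.inter_subset_right,
        hXZ_YZ.mono Set.inter_subset_right Set.inter_subset_right⟩)]
  exact Set.ncard_le_ncard (by simp only [← Set.inter_union_distrib_left, Set.inter_subset_left])

theorem ncard_edgesBetween_le (G : SimpleGraph V) (X Y : Finset V) :
    (edgesBetween G X Y).ncard ≤ #X * #Y := by
  classical
  have hsub : edgesBetween G X Y ⊆ ((X ×ˢ Y).image fun p => s(p.1, p.2) : Finset (Sym2 V)) := by
    rintro _ ⟨-, u, hu, w, hw, rfl⟩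
    exact mem_coe.2 (mem_image_of_mem _ (mem_product.2 ⟨hu, hw⟩))
  calc (edgesBetween G X Y).ncard ≤ #((X ×ˢ Y).image fun p => s(p.1, p.2)) := by
        rw [← Set.ncard_coe_finset]; exact Set.ncard_le_ncard hsub
    _ ≤ #X * #Y := card_product X Y ▸ card_image_le

theorem card_filter_mk_mem_le_ncard_inter_edgesBetween [Finite V] {G : SimpleGraph V}
    {X Y : Finset V} (hXY : Disjoint (X : Set V) Y) {E' : Set (Sym2 V)} [DecidablePred (· ∈ E')]
    (hE' : E' ⊆ G.edgeSet) :
    #{xy ∈ X ×ˢ Y | s(xy.1, xy.2) ∈ E'} ≤ (E' ∩ edgesBetween G X Y).ncard := by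
  rw [← Set.ncard_coe_finset]
  refine Set.ncard_le_ncard_of_injOn (fun p => s(p.1, p.2)) ?_ ?_ (Set.toFinite _)
  · rintro ⟨x, y⟩ hxy
    simp only [coe_filter, mem_product, Set.mem_ofPred_eq] at hxy
    exact ⟨hxy.2, hE' hxy.2, x, hxy.1.1, y, hxy.1.2, rfl⟩
  · rintro ⟨x, y⟩ hxy ⟨x', y'⟩ hxy' h
    simp only [coe_filter, mem_product, Set.mem_ofPred_eq] at hxy hxy'
    rcases Sym2.eq_iff.mp h with ⟨rfl, rfl⟩ | ⟨rfl, -⟩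
    · rfl
    · exact absurd hxy'.1.2 (Set.disjoint_left.mp hXY hxy.1.1)

theorem IsTriTransversal.mk_mem_or {G : SimpleGraph V} {E' : Set (Sym2 V)}
    (hE' : IsTriTransversal G E') {a b c : V} (hab : G.Adj a b) (hac : G.Adj a c)
    (hbc : G.Adj b c) : s(a, b) ∈ E' ∨ s(a, c) ∈ E' ∨ s(b, c) ∈ E' := by
  classical
  obtain ⟨e, ⟨u, hu, v, hv, huv, rfl⟩, he⟩ :=
    hE'.2 {a, b, c} (is3Clique_triple_iff.2 ⟨hab, hac, hbc⟩)
  simp only [mem_insert, mem_singleton] at hu hv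
  rcases hu with rfl | rfl | rfl <;> rcases hv with rfl | rfl | rfl <;> simp_all [Sym2.eq_swap]

theorem triTransversalNum_le {G : SimpleGraph V} {E' : Set (Sym2 V)}
    (h : IsTriTransversal G E') : triTransversalNum G ≤ E'.ncard :=
  Nat.sInf_le ⟨E', h, rfl⟩

theorem le_triTransversalNum {G : SimpleGraph V} {n : ℕ} (hne : ∃ E', IsTriTransversal G E')
    (h : ∀ E', IsTriTransversal G E' → n ≤ E'.ncard) : n ≤ triTransversalNum G := by
  obtain ⟨E', hE'⟩ := hne
  exact le_csInf ⟨_, E', hE', rfl⟩ fun m ⟨E', hE', hm⟩ => hm ▸ h E' hE'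

theorem ncard_edgesBetween_le_of_isTriTransversal [Finite V] {G : SimpleGraph V}
    {X Y Z : Set V} (hXY : Disjoint X Y) (hXZ : Disjoint X Z) (hYZ : Disjoint Y Z)
    (cXY : CompleteSide G X Y) (cXZ : CompleteSide G X Z) (cYZ : CompleteSide G Y Z)
    (hX : X.ncard ≤ Z.ncard) (hY : Y.ncard ≤ Z.ncard) {E' : Set (Sym2 V)}
    (hE' : IsTriTransversal G E') : (edgesBetween G X Y).ncard ≤ E'.ncard := by
  classical
  lift X to Finset V using X.toFinite
  lift Y to Finset V using Y.toFinite
  lift Z to Finset V using Z.toFinite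
  rw [Set.ncard_coe_finset, Set.ncard_coe_finset] at hX hY
  calc (edgesBetween G X Y).ncard ≤ #X * #Y := ncard_edgesBetween_le G X Y
    _ ≤ #{xy ∈ X ×ˢ Y | s(xy.1, xy.2) ∈ E'} + #{xz ∈ X ×ˢ Z | s(xz.1, xz.2) ∈ E'} +
          #{yz ∈ Y ×ˢ Z | s(yz.1, yz.2) ∈ E'} :=
      card_mul_card_le_of_forall_or X Y Z (fun x y => s(x, y) ∈ E') (fun x z => s(x, z) ∈ E')
        (fun y z => s(y, z) ∈ E') hX hY fun x hx y hy z hz =>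
          hE'.mk_mem_or (cXY x hx y hy) (cXZ x hx z hz) (cYZ y hy z hz)
    _ ≤ (E' ∩ edgesBetween G X Y).ncard + (E' ∩ edgesBetween G X Z).ncard +
          (E' ∩ edgesBetween G Y Z).ncard :=
      add_le_add (add_le_add (card_filter_mk_mem_le_ncard_inter_edgesBetween hXY hE'.1)
        (card_filter_mk_mem_le_ncard_inter_edgesBetween hXZ hE'.1))
        (card_filter_mk_mem_le_ncard_inter_edgesBetween hYZ hE'.1)
    _ ≤ E'.ncard := ncard_inter_edgesBetween_add_le G hXY hXZ hYZ E'

/-- If `G` is a complete tripartite graph, then the edge set of each side is a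
`𝒯`-transversal of `G`, and `τ△(G)` equals the minimum of `|E_AB|`, `|E_AC|` and
`|E_BC|`; in particular the edge set of a smallest side is a minimum
`𝒯`-transversal of `G`. -/
theorem smallest_side_min_transversal_of_completeTripartite [Fintype V]
    (G : SimpleGraph V) (A B C : Set V) (hpart : IsTripartition G A B C)
    (hAB : CompleteSide G A B) (hAC : CompleteSide G A C)
    (hBC : CompleteSide G B C) :
    IsTriTransversal G (edgesBetween G A B) ∧
      IsTriTransversal G (edgesBetween G A C) ∧
      IsTriTransversal G (edgesBetween G B C) ∧
      triTransversalNum G =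
        min (edgesBetween G A B).ncard
          (min (edgesBetween G A C).ncard (edgesBetween G B C).ncard) := by
  have tAB := hpart.isTriTransversal_edgesBetween
  have tAC := hpart.swap_right.isTriTransversal_edgesBetween
  have tBC := hpart.rotate.isTriTransversal_edgesBetween
  refine ⟨tAB, tAC, tBC, le_antisymm ?_ (le_triTransversalNum ⟨_, tAB⟩ fun E' hE' => ?_)⟩
  · exact le_min (triTransversalNum_le tAB)
      (le_min (triTransversalNum_le tAC) (triTransversalNum_le tBC))
  obtain ⟨-, dAB, dAC, dBC, -⟩ := hpart
  obtain hC | hB | hA : (A.ncard ≤ C.ncard ∧ B.ncard ≤ C.ncard) ∨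
      (A.ncard ≤ B.ncard ∧ C.ncard ≤ B.ncard) ∨ (B.ncard ≤ A.ncard ∧ C.ncard ≤ A.ncard) := by
    omega
  · exact (min_le_left _ _).trans <|
      ncard_edgesBetween_le_of_isTriTransversal dAB dAC dBC hAB hAC hBC hC.1 hC.2 hE'
  · exact (min_le_right _ _).trans <| (min_le_left _ _).trans <|
      ncard_edgesBetween_le_of_isTriTransversal dAC dAB dBC.symm hAC hAB hBC.symm hB.1 hB.2 hE'
  · exact (min_le_right _ _).trans <| (min_le_right _ _).trans <|
      ncard_edgesBetween_le_of_isTriTransversal dBC dAB.symm dAC.symm hBC hAB.symm hAC.symm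
        hA.1 hA.2 hE'
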